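/- For every d ≥ 1, μ ∈ ℝ^d \ {0}, σ > 0 and γ > 0, the multidimensional Rashomon ratio is strictly positive: R(μ) > 0. In particular, E_{μ,σ}(p, t) is continuous in (p, t) on {p ≠ 0} and E_{μ,σ}(μ, 0) = Φ(‖μ‖/σ) − (1/2)Φ(‖μ‖/σ) − (1/2)Φ(‖μ‖/σ) = 0, so the sublevel set {(p,t) ∈ S^d : E_{μ,σ}(p,t) ≤ γ} contains a relatively open neighborhood of the point (μ/‖μ‖, 0) ∈ S^d of positive surface measure. -/

import Mathlib

open Classical MeasureTheory ProbabilityTheory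

/-- `Φ`, the standard Gaussian cumulative distribution function. -/
noncomputable def Phi (x : ℝ) : ℝ := ((gaussianReal 0 1) (Set.Iic x)).toReal

/-- Euclidean dot product on `ℝ^d`. -/
noncomputable def dotp {d : ℕ} (a b : Fin d → ℝ) : ℝ := ∑ i, a i * b i

/-- Euclidean norm of a vector in `ℝ^d`. -/
noncomputable def eucNorm {d : ℕ} (x : Fin d → ℝ) : ℝ := Real.sqrt (∑ i, (x i) ^ 2)

/-- `E_{μ,σ}(p, t)`: reducible error of the affine classifier with parameters `(p, t)` for
the antipodal equal-prior mixture of `N_d(−μ, σ²I)` and `N_d(μ, σ²I)`. -/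
noncomputable def redErrMD (d : ℕ) (μ : Fin d → ℝ) (σ : ℝ) (p : Fin d → ℝ) (t : ℝ) : ℝ :=
  Phi (eucNorm μ / σ) - (1 / 2) * Phi ((|dotp p μ| - t) / (σ * eucNorm p))
    - (1 / 2) * Phi ((t + |dotp p μ|) / (σ * eucNorm p))

/-- The (non-normalized) uniform surface measure on the unit sphere
`S^d ⊂ ℝ^{d+1}`. -/
noncomputable def sphereMeasure (d : ℕ) :
    Measure (Metric.sphere (0 : EuclideanSpace ℝ (Fin (d + 1))) 1) :=
  (volume : Measure (EuclideanSpace ℝ (Fin (d + 1)))).toSphere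

/-- First `d` coordinates `p` of a point of `ℝ^{d+1}`. -/
noncomputable def pPart (d : ℕ) (x : EuclideanSpace ℝ (Fin (d + 1))) : Fin d → ℝ :=
  fun i => x i.castSucc

/-- Last coordinate `t` of a point of `ℝ^{d+1}`. -/
noncomputable def tPart (d : ℕ) (x : EuclideanSpace ℝ (Fin (d + 1))) : ℝ :=
  x (Fin.last d)

/-- The multidimensional Rashomon ratio `R(μ)`: the normalized uniform surface measure of
`{(p, t) ∈ S^d : p ≠ 0, E_{μ,σ}(p, t) ≤ γ}`. -/
noncomputable def rashRatioMD (d : ℕ) (σ γ : ℝ) (μ : Fin d → ℝ) : ℝ :=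
  (sphereMeasure d {x | pPart d x.val ≠ 0 ∧
      redErrMD d μ σ (pPart d x.val) (tPart d x.val) ≤ γ}).toReal
    / (sphereMeasure d Set.univ).toReal

/-!
`E_{μ,σ}` is continuous where `p ≠ 0` and invariant under `(p, t) ↦ (c p, c t)` for `c > 0`,
and it vanishes at `(μ, 0)`, hence at the point `(μ/‖μ‖, 0)` of the sphere. So the strict
sublevel set `{E < γ}` is a nonempty open subset of `S^d`, and the surface measure charges
every nonempty open set.
-/

open Metric Set

lemma Phi_eq_integral (x : ℝ) : Phi x = ∫ t in Iic x, gaussianPDFReal 0 1 t := by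
  rw [Phi, gaussianReal_apply_eq_integral 0 one_ne_zero,
    ENNReal.toReal_ofReal (integral_nonneg fun t => gaussianPDFReal_nonneg 0 1 t)]

lemma continuous_Phi : Continuous Phi := by
  have hpdf : Integrable (gaussianPDFReal 0 1) := integrable_gaussianPDFReal 0 1
  have hprimitive : Phi = fun x => Phi 0 + ∫ t in (0 : ℝ)..x, gaussianPDFReal 0 1 t := by
    funext x
    rw [Phi_eq_integral, Phi_eq_integral, ← intervalIntegral.integral_Iic_sub_Iic
      hpdf.integrableOn hpdf.integrableOn, add_sub_cancel]
  rw [hprimitive]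
  exact continuous_const.add (hpdf.continuous_primitive 0)

section EuclideanCoordinates

variable {d : ℕ}

lemma eucNorm_eq_norm (x : Fin d → ℝ) : eucNorm x = ‖WithLp.toLp 2 x‖ := by
  simp [eucNorm, EuclideanSpace.norm_eq]

lemma continuous_eucNorm : Continuous (eucNorm : (Fin d → ℝ) → ℝ) :=
  (PiLp.continuous_toLp 2 _).norm.congr fun x => (eucNorm_eq_norm x).symm

lemma eucNorm_pos {x : Fin d → ℝ} (hx : x ≠ 0) : 0 < eucNorm x := by
  rw [eucNorm_eq_norm]
  exact norm_pos_iff.2 fun h => hx (by simpa using congrArg WithLp.ofLp h)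

lemma eucNorm_smul (c : ℝ) (x : Fin d → ℝ) : eucNorm (c • x) = |c| * eucNorm x := by
  rw [eucNorm_eq_norm, eucNorm_eq_norm, WithLp.toLp_smul, norm_smul, Real.norm_eq_abs]

lemma dotp_smul_left (c : ℝ) (a b : Fin d → ℝ) : dotp (c • a) b = c * dotp a b := by
  simp [dotp, Finset.mul_sum, mul_assoc]

lemma dotp_self (x : Fin d → ℝ) : dotp x x = eucNorm x ^ 2 := by
  rw [eucNorm, Real.sq_sqrt (Finset.sum_nonneg fun _ _ => sq_nonneg _)]
  simp [dotp, sq]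

lemma continuous_dotp_left (b : Fin d → ℝ) : Continuous fun a : Fin d → ℝ => dotp a b := by
  unfold dotp
  fun_prop

lemma norm_toLp_snoc (p : Fin d → ℝ) (t : ℝ) :
    ‖WithLp.toLp 2 (Fin.snoc p t : Fin (d + 1) → ℝ)‖ = √(eucNorm p ^ 2 + t ^ 2) := by
  rw [← dotp_self, EuclideanSpace.norm_eq, Fin.sum_univ_castSucc]
  simp [dotp, sq]

@[simp]
lemma pPart_toLp_snoc (p : Fin d → ℝ) (t : ℝ) :
    pPart d (WithLp.toLp 2 (Fin.snoc p t)) = p := by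
  funext i
  simp [pPart]

@[simp]
lemma tPart_toLp_snoc (p : Fin d → ℝ) (t : ℝ) :
    tPart d (WithLp.toLp 2 (Fin.snoc p t)) = t := by
  simp [tPart]

lemma eucNorm_inv_smul_self {x : Fin d → ℝ} (hx : x ≠ 0) :
    eucNorm ((eucNorm x)⁻¹ • x) = 1 := by
  rw [eucNorm_smul, abs_inv, abs_of_pos (eucNorm_pos hx), inv_mul_cancel₀ (eucNorm_pos hx).ne']

lemma toLp_snoc_zero_mem_sphere {p : Fin d → ℝ} (hp : eucNorm p = 1) :
    WithLp.toLp 2 (Fin.snoc p 0 : Fin (d + 1) → ℝ)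
      ∈ sphere (0 : EuclideanSpace ℝ (Fin (d + 1))) 1 := by
  rw [mem_sphere_zero_iff_norm, norm_toLp_snoc, hp]
  norm_num

lemma continuous_pPart : Continuous (pPart d) := by
  unfold pPart
  fun_prop

lemma continuous_tPart : Continuous (tPart d) := by
  unfold tPart
  fun_prop

end EuclideanCoordinates

section ReducibleError

variable {d : ℕ} (μ : Fin d → ℝ) {σ : ℝ}

lemma continuousOn_redErrMD (hσ : 0 < σ) :
    ContinuousOn (fun q : (Fin d → ℝ) × ℝ => redErrMD d μ σ q.1 q.2) {q | q.1 ≠ 0} := by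
  have hdot : Continuous fun q : (Fin d → ℝ) × ℝ => |dotp q.1 μ| :=
    ((continuous_dotp_left μ).comp continuous_fst).abs
  have hden : ∀ q ∈ {q : (Fin d → ℝ) × ℝ | q.1 ≠ 0}, σ * eucNorm q.1 ≠ 0 :=
    fun q hq => (mul_pos hσ (eucNorm_pos hq)).ne'
  have hscale : ContinuousOn (fun q : (Fin d → ℝ) × ℝ => σ * eucNorm q.1) {q | q.1 ≠ 0} :=
    (continuous_const.mul (continuous_eucNorm.comp continuous_fst)).continuousOn
  refine (continuousOn_const.sub (continuousOn_const.mul ?_)).sub (continuousOn_const.mul ?_)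
  · exact continuous_Phi.comp_continuousOn
      ((hdot.sub continuous_snd).continuousOn.div hscale hden)
  · exact continuous_Phi.comp_continuousOn
      ((continuous_snd.add hdot).continuousOn.div hscale hden)

lemma redErrMD_smul {c : ℝ} (hc : 0 < c) (p : Fin d → ℝ) (t : ℝ) :
    redErrMD d μ σ (c • p) (c * t) = redErrMD d μ σ p t := by
  have hscale : σ * eucNorm (c • p) = c * (σ * eucNorm p) := by
    rw [eucNorm_smul, abs_of_pos hc]
    ring
  have habs : |dotp (c • p) μ| = c * |dotp p μ| := by
    rw [dotp_smul_left, abs_mul, abs_of_pos hc]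
  simp only [redErrMD, hscale, habs, ← mul_sub, ← mul_add, mul_div_mul_left _ _ hc.ne']

lemma redErrMD_self (σ : ℝ) :
    redErrMD d μ σ μ 0
      = Phi (eucNorm μ / σ) - (1 / 2) * Phi (eucNorm μ / σ)
          - (1 / 2) * Phi (eucNorm μ / σ) := by
  have hratio : eucNorm μ ^ 2 / (σ * eucNorm μ) = eucNorm μ / σ := by
    rcases eq_or_ne (eucNorm μ) 0 with h | h
    · simp [h]
    · rw [sq, mul_comm σ, mul_div_mul_left _ _ h]
  rw [redErrMD, dotp_self, abs_of_nonneg (sq_nonneg _), sub_zero, zero_add, hratio]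

lemma redErrMD_self_eq_zero (σ : ℝ) : redErrMD d μ σ μ 0 = 0 := by
  rw [redErrMD_self]
  ring

lemma redErrMD_inv_eucNorm_smul_self (hμ : μ ≠ 0) :
    redErrMD d μ σ ((eucNorm μ)⁻¹ • μ) 0 = 0 := by
  simpa [redErrMD_self_eq_zero] using redErrMD_smul μ (σ := σ) (inv_pos.2 (eucNorm_pos hμ)) μ 0

end ReducibleError

lemma isOpen_setOf_redErrMD_lt {d : ℕ} (μ : Fin d → ℝ) {σ : ℝ} (hσ : 0 < σ) (γ : ℝ) :
    IsOpen {x : sphere (0 : EuclideanSpace ℝ (Fin (d + 1))) 1 |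
      pPart d x.val ≠ 0 ∧ redErrMD d μ σ (pPart d x.val) (tPart d x.val) < γ} := by
  have hcoords : Continuous fun x : sphere (0 : EuclideanSpace ℝ (Fin (d + 1))) 1 =>
      (pPart d x.val, tPart d x.val) :=
    (continuous_pPart.prodMk continuous_tPart).comp continuous_subtype_val
  have hp : IsOpen {x : sphere (0 : EuclideanSpace ℝ (Fin (d + 1))) 1 | pPart d x.val ≠ 0} :=
    isOpen_ne_fun (continuous_pPart.comp continuous_subtype_val) continuous_const
  exact ((continuousOn_redErrMD μ hσ).comp hcoords.continuousOn fun _ h => h)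
    |>.isOpen_inter_preimage hp isOpen_Iio

instance {d : ℕ} : IsFiniteMeasure (sphereMeasure d) := by
  unfold sphereMeasure
  infer_instance

instance {d : ℕ} : (sphereMeasure d).IsOpenPosMeasure := by
  unfold sphereMeasure
  infer_instance

lemma rashRatioMD_pos_of_subset {d : ℕ} {σ γ : ℝ} {μ : Fin d → ℝ}
    {U : Set (sphere (0 : EuclideanSpace ℝ (Fin (d + 1))) 1)} (hU : 0 < sphereMeasure d U)
    (hsub : U ⊆ {x | pPart d x.val ≠ 0 ∧
      redErrMD d μ σ (pPart d x.val) (tPart d x.val) ≤ γ}) :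
    0 < rashRatioMD d σ γ μ :=
  div_pos (ENNReal.toReal_pos (hU.trans_le (measure_mono hsub)).ne' (measure_ne_top _ _))
    (ENNReal.toReal_pos (hU.trans_le (measure_mono (subset_univ U))).ne' (measure_ne_top _ _))

theorem rashRatioMD_pos_general
    (d : ℕ) (μ : Fin d → ℝ) (hμ : μ ≠ 0)
    (σ : ℝ) (hσ : 0 < σ) (γ : ℝ) (hγ : 0 < γ) :
    ContinuousOn (fun q : (Fin d → ℝ) × ℝ => redErrMD d μ σ q.1 q.2)
        {q : (Fin d → ℝ) × ℝ | q.1 ≠ 0} ∧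
    redErrMD d μ σ μ 0
      = Phi (eucNorm μ / σ) - (1 / 2) * Phi (eucNorm μ / σ)
          - (1 / 2) * Phi (eucNorm μ / σ) ∧
    redErrMD d μ σ μ 0 = 0 ∧
    (∃ U : Set (Metric.sphere (0 : EuclideanSpace ℝ (Fin (d + 1))) 1),
      IsOpen U ∧
      ((Fin.snoc (fun i => μ i / eucNorm μ) 0 : Fin (d + 1) → ℝ)
        ∈ (fun x => (fun i => x.val i)) '' U) ∧
      (∀ x ∈ U, redErrMD d μ σ (pPart d x.val) (tPart d x.val) ≤ γ) ∧
      0 < sphereMeasure d U) ∧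
    0 < rashRatioMD d σ γ μ := by
  have hdir : (fun i => μ i / eucNorm μ) = (eucNorm μ)⁻¹ • μ := by
    funext i
    simp [div_eq_inv_mul]
  set x₀ : sphere (0 : EuclideanSpace ℝ (Fin (d + 1))) 1 :=
    ⟨_, toLp_snoc_zero_mem_sphere (eucNorm_inv_smul_self hμ)⟩
  set U := {x : sphere (0 : EuclideanSpace ℝ (Fin (d + 1))) 1 |
    pPart d x.val ≠ 0 ∧ redErrMD d μ σ (pPart d x.val) (tPart d x.val) < γ}
  have hx₀U : x₀ ∈ U := by
    refine ⟨?_, ?_⟩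
    · simpa [x₀] using smul_ne_zero (inv_ne_zero (eucNorm_pos hμ).ne') hμ
    · simpa [x₀, redErrMD_inv_eucNorm_smul_self μ hμ] using hγ
  have hU_pos : 0 < sphereMeasure d U :=
    (isOpen_setOf_redErrMD_lt μ hσ γ).measure_pos _ ⟨x₀, hx₀U⟩
  refine ⟨continuousOn_redErrMD μ hσ, redErrMD_self μ σ, redErrMD_self_eq_zero μ σ,
    ⟨U, isOpen_setOf_redErrMD_lt μ hσ γ, ⟨x₀, hx₀U, by rw [hdir]⟩, fun _ hx => hx.2.le,
      hU_pos⟩,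
    rashRatioMD_pos_of_subset hU_pos fun x hx => ⟨hx.1, hx.2.le⟩⟩

/-- For `μ ≠ 0` the multidimensional Rashomon ratio is strictly positive.
In particular `E_{μ,σ}` is continuous in `(p, t)` on `{p ≠ 0}` and `E_{μ,σ}(μ, 0) = 0`, so
the sublevel set `{(p,t) ∈ S^d : E_{μ,σ}(p,t) ≤ γ}` contains a relatively open neighborhood
of the point `(μ/‖μ‖, 0) ∈ S^d` of positive surface measure. -/
theorem rashRatioMD_pos
    (d : ℕ) (hd : 1 ≤ d) (μ : Fin d → ℝ) (hμ : μ ≠ 0)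
    (σ : ℝ) (hσ : 0 < σ) (γ : ℝ) (hγ : 0 < γ) :
    ContinuousOn (fun q : (Fin d → ℝ) × ℝ => redErrMD d μ σ q.1 q.2)
        {q : (Fin d → ℝ) × ℝ | q.1 ≠ 0} ∧
    redErrMD d μ σ μ 0
      = Phi (eucNorm μ / σ) - (1 / 2) * Phi (eucNorm μ / σ)
          - (1 / 2) * Phi (eucNorm μ / σ) ∧
    redErrMD d μ σ μ 0 = 0 ∧
    (∃ U : Set (Metric.sphere (0 : EuclideanSpace ℝ (Fin (d + 1))) 1),
      IsOpen U ∧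
      ((Fin.snoc (fun i => μ i / eucNorm μ) 0 : Fin (d + 1) → ℝ)
        ∈ (fun x => (fun i => x.val i)) '' U) ∧
      (∀ x ∈ U, redErrMD d μ σ (pPart d x.val) (tPart d x.val) ≤ γ) ∧
      0 < sphereMeasure d U) ∧
    0 < rashRatioMD d σ γ μ :=
  rashRatioMD_pos_general d μ hμ σ hσ γ hγ
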